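/- arXiv:1902.01480 — 3 statements merged into one kernel-verified Lean document; each statement's English description precedes it below -/
import Mathlib

section
/- Let q ∈ (0,1) and let 0 < c₁ < c₂ < 1. For each K ∈ ℕ, let Z_K be a Binomial(K,q) random variable, and define the two-point correlation dimension at radii c₁Kq and c₂Kq as cd_R(K) = (log P(Z_K ≤ c₂Kq) - log P(Z_K ≤ c₁Kq)) / (log(c₂Kq) - log(c₁Kq)). Then lim_{K→∞} cd_R(K)/K = (D(c₁q ‖ q) - D(c₂q ‖ q)) / (log c₂ - log c₁), where D(a ‖ q) = a·log(a/q) + (1-a)·log((1-a)/(1-q)) is the binary Kullback–Leibler divergence. -/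
/-- The cumulative distribution function of the Binomial(`K`, `q`) distribution:
`binomCdf q K r = P(Z_K ≤ r) = Σ_{k ≤ r} C(K,k)·qᵏ·(1-q)^(K-k)`. -/
noncomputable def binomCdf (q : ℝ) (K : ℕ) (r : ℝ) : ℝ :=
  ∑ k ∈ Finset.range (K + 1),
    if (k : ℝ) ≤ r then (K.choose k : ℝ) * q ^ k * (1 - q) ^ (K - k) else 0

/-- The Kullback–Leibler divergence between Bernoulli(`a`) and Bernoulli(`q`). -/
noncomputable def klBernoulli (a q : ℝ) : ℝ :=
  a * Real.log (a / q) + (1 - a) * Real.log ((1 - a) / (1 - q))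

/-! ### Auxiliary lemmas -/

noncomputable def bterm (q : ℝ) (K k : ℕ) : ℝ := (K.choose k : ℝ) * q ^ k * (1 - q) ^ (K - k)

lemma log_factorial_lb (n : ℕ) : (n:ℝ) * Real.log n - n ≤ Real.log n.factorial := by
  induction n with
  | zero => simp
  | succ n ih =>
    have key : (n:ℝ) * (Real.log ((n:ℝ)+1) - Real.log n) ≤ 1 := by
      rcases Nat.eq_zero_or_pos n with h | h
      · subst h; simp
      · have hn : (0:ℝ) < n := by exact_mod_cast h
        have h1 : Real.log (((n:ℝ)+1)/n) ≤ ((n:ℝ)+1)/n - 1 :=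
          Real.log_le_sub_one_of_pos (by positivity)
        rw [Real.log_div (by positivity) (by positivity)] at h1
        have h2 : ((n:ℝ)+1)/n - 1 = 1/n := by field_simp; ring
        rw [h2] at h1
        calc (n:ℝ) * (Real.log ((n:ℝ)+1) - Real.log n) ≤ (n:ℝ) * (1/n) := by
              exact mul_le_mul_of_nonneg_left h1 (le_of_lt hn)
          _ = 1 := by field_simp
    have hfact : Real.log (n+1).factorial = Real.log ((n:ℝ)+1) + Real.log n.factorial := by
      rw [Nat.factorial_succ]
      push_cast
      rw [Real.log_mul (by positivity) (by exact_mod_cast n.factorial_pos.ne')]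
    rw [hfact]
    push_cast
    nlinarith [key, ih]

lemma log_factorial_ub (n : ℕ) : Real.log n.factorial ≤ ((n:ℝ)+1) * Real.log ((n:ℝ)+1) - n := by
  induction n with
  | zero => simp
  | succ n ih =>
    have key : (1:ℝ) ≤ ((n:ℝ)+2) * (Real.log ((n:ℝ)+2) - Real.log ((n:ℝ)+1)) := by
      have h1 : 1 - (((n:ℝ)+2)/((n:ℝ)+1))⁻¹ ≤ Real.log (((n:ℝ)+2)/((n:ℝ)+1)) :=
        Real.one_sub_inv_le_log_of_pos (by positivity)
      rw [Real.log_div (by positivity) (by positivity)] at h1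
      have h2 : 1 - (((n:ℝ)+2)/((n:ℝ)+1))⁻¹ = 1/((n:ℝ)+2) := by
        rw [inv_div]; field_simp; norm_num
      rw [h2] at h1
      have := mul_le_mul_of_nonneg_left h1 (by positivity : (0:ℝ) ≤ (n:ℝ)+2)
      calc (1:ℝ) = ((n:ℝ)+2) * (1/((n:ℝ)+2)) := by field_simp
        _ ≤ _ := this
    have hfact : Real.log (n+1).factorial = Real.log ((n:ℝ)+1) + Real.log n.factorial := by
      rw [Nat.factorial_succ]
      push_cast
      rw [Real.log_mul (by positivity) (by exact_mod_cast n.factorial_pos.ne')]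
    rw [hfact]
    push_cast
    have e : ((n:ℝ) + 1 + 1) = (n:ℝ) + 2 := by ring
    rw [e]
    nlinarith [key, ih]

lemma bterm_pos {q : ℝ} (hq0 : 0 < q) (hq1 : q < 1) {K k : ℕ} (hk : k ≤ K) :
    0 < bterm q K k := by
  have h1 : (0:ℝ) < K.choose k := by exact_mod_cast Nat.choose_pos hk
  have h2 : (0:ℝ) < 1 - q := by linarith
  unfold bterm
  positivity

lemma bterm_step {q : ℝ} (hq0 : 0 < q) (hq1 : q < 1) {K k : ℕ} (hk : k < K)
    (h : ((k:ℝ) + 1) * (1 - q) ≤ ((K:ℝ) - k) * q) :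
    bterm q K k ≤ bterm q K (k + 1) := by
  have hid : (K.choose (k+1) : ℝ) * ((k:ℝ)+1) = (K.choose k : ℝ) * ((K:ℝ) - k) := by
    have := Nat.choose_succ_right_eq K k
    have h2 : ((K.choose (k+1) * (k+1) : ℕ) : ℝ) = ((K.choose k * (K - k) : ℕ) : ℝ) := by
      exact_mod_cast congrArg Nat.cast this
    push_cast [Nat.cast_sub hk.le] at h2
    linarith
  have hpow : (1 - q) ^ (K - k) = (1 - q) ^ (K - (k+1)) * (1 - q) := by
    rw [← pow_succ]
    congr 1
    omega
  have key : bterm q K (k+1) * (((k:ℝ)+1) * (1 - q)) = bterm q K k * (((K:ℝ) - k) * q) := by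
    unfold bterm
    rw [hpow]
    linear_combination (q^(k+1) * (1-q)^(K-(k+1)) * (1-q)) * hid
  have hb1 : 0 < bterm q K k := bterm_pos hq0 hq1 hk.le
  have hb2 : 0 < bterm q K (k+1) := bterm_pos hq0 hq1 hk
  have hA : 0 < ((k:ℝ)+1) * (1 - q) := by
    have : (0:ℝ) ≤ k := Nat.cast_nonneg k
    nlinarith
  nlinarith [mul_le_mul_of_nonneg_left h hb1.le]

lemma bterm_mono {m : ℕ} {f : ℕ → ℝ}
    (h : ∀ k, k < m → f k ≤ f (k+1)) : ∀ k, k ≤ m → f k ≤ f m := by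
  induction m with
  | zero =>
    intro k hk
    have : k = 0 := Nat.le_zero.mp hk
    subst this
    exact le_refl _
  | succ m ih =>
    intro k hk
    rcases Nat.eq_or_lt_of_le hk with h1 | h1
    · subst h1; exact le_refl _
    · have hk' : k ≤ m := by omega
      exact le_trans (ih (fun j hj => h j (by omega)) k hk') (h m (by omega))

lemma binomCdf_sandwich {q c : ℝ} (hq0 : 0 < q) (hq1 : q < 1) (hc0 : 0 < c) (hc1 : c < 1)
    {K : ℕ} (hK : 1 ≤ K)
    (hmono : ∀ k, k ≤ ⌊c * K * q⌋₊ → bterm q K k ≤ bterm q K ⌊c * K * q⌋₊)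
    (hpos : ∀ k, k ≤ K → 0 < bterm q K k) :
    bterm q K ⌊c * K * q⌋₊ ≤ binomCdf q K (c * K * q) ∧
      binomCdf q K (c * K * q) ≤ ((K:ℝ) + 1) * bterm q K ⌊c * K * q⌋₊ := by
  set m := ⌊c * K * q⌋₊ with hm
  have hK0 : (0:ℝ) < K := by exact_mod_cast hK
  have hr0 : 0 ≤ c * K * q := by positivity
  have hmr : (m : ℝ) ≤ c * K * q := Nat.floor_le hr0
  have hmK : m < K := by
    have hcq : c * q < 1 := by nlinarith
    have h1 : c * K * q < K := by nlinarith [mul_pos (sub_pos.mpr hcq) hK0]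
    have : (m:ℝ) < K := lt_of_le_of_lt hmr h1
    exact_mod_cast this
  have hsum : binomCdf q K (c * K * q) = ∑ k ∈ Finset.range (m + 1), bterm q K k := by
    unfold binomCdf
    rw [← Finset.sum_filter]
    apply Finset.sum_congr
    · ext k
      simp only [Finset.mem_filter, Finset.mem_range, Nat.lt_succ_iff]
      constructor
      · rintro ⟨_, h2⟩
        exact Nat.le_floor h2
      · intro hkm
        refine ⟨le_trans hkm hmK.le, ?_⟩
        exact le_trans (by exact_mod_cast hkm) hmr
    · intro k _
      rfl
  constructor
  · rw [hsum]
    apply Finset.single_le_sum (f := fun k => bterm q K k)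
    · intro k hk
      exact (hpos k (by simp at hk; omega)).le
    · simp
  · rw [hsum]
    calc ∑ k ∈ Finset.range (m + 1), bterm q K k
        ≤ (Finset.range (m + 1)).card • bterm q K m :=
          Finset.sum_le_card_nsmul _ _ _ (fun k hk => hmono k (by simpa [Nat.lt_succ_iff] using hk))
      _ = ((m:ℝ) + 1) * bterm q K m := by
          rw [Finset.card_range, nsmul_eq_mul]; push_cast; ring
      _ ≤ ((K:ℝ) + 1) * bterm q K m := by
          have := (hpos m hmK.le).le
          have hmK' : (m:ℝ) ≤ K := by exact_mod_cast hmK.le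
          nlinarith

lemma tendsto_log_div_nat : Filter.Tendsto (fun K : ℕ => Real.log K / K) Filter.atTop (nhds 0) :=
  (Real.isLittleO_log_id_atTop.tendsto_div_nhds_zero).comp tendsto_natCast_atTop_atTop

lemma tendsto_glog {u : ℕ → ℝ} {t : ℝ} (ht : t ≠ 0) (hu : Filter.Tendsto u Filter.atTop (nhds t)) :
    Filter.Tendsto (fun K => u K * Real.log (u K)) Filter.atTop (nhds (t * Real.log t)) :=
  ((continuousAt_id.mul (Real.continuousAt_log ht)).tendsto).comp hu

lemma tendsto_floor_div {q c : ℝ} (hq0 : 0 < q) (hc0 : 0 < c) :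
    Filter.Tendsto (fun K : ℕ => ((⌊c * K * q⌋₊ : ℝ)) / K) Filter.atTop (nhds (c * q)) := by
  apply tendsto_of_tendsto_of_tendsto_of_le_of_le'
    (g := fun K : ℕ => c * q - 1 / K) (h := fun _ : ℕ => c * q)
  · have h1 : Filter.Tendsto (fun K : ℕ => (1:ℝ) / K) Filter.atTop (nhds 0) :=
      tendsto_one_div_atTop_nhds_zero_nat
    have := (tendsto_const_nhds (x := c * q) (f := Filter.atTop (α := ℕ))).sub h1
    simpa using this
  · exact tendsto_const_nhds
  · filter_upwards [Filter.eventually_atTop.mpr ⟨1, fun K hK => hK⟩] with K hK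
    have hK0 : (0:ℝ) < K := by exact_mod_cast hK
    have h2 : c * K * q - 1 < (⌊c * K * q⌋₊ : ℝ) := by
      have := Nat.lt_floor_add_one (c * K * q)
      linarith
    rw [le_div_iff₀ hK0]
    have e : (c * q - 1 / K) * K = c * K * q - 1 := by field_simp
    rw [e]
    linarith
  · filter_upwards [Filter.eventually_atTop.mpr ⟨1, fun K hK => hK⟩] with K hK
    have hK0 : (0:ℝ) < K := by exact_mod_cast hK
    have hr0 : 0 ≤ c * K * q := by positivity
    rw [div_le_iff₀ hK0]
    have := Nat.floor_le hr0
    nlinarith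

lemma tendsto_log_choose {q c : ℝ} (hq0 : 0 < q) (hq1 : q < 1) (hc0 : 0 < c) (hc1 : c < 1) :
    Filter.Tendsto (fun K : ℕ => Real.log ((K.choose ⌊c * K * q⌋₊ : ℕ) : ℝ) / K) Filter.atTop
      (nhds (-(c * q * Real.log (c * q) + (1 - c * q) * Real.log (1 - c * q)))) := by
  have ha0 : 0 < c * q := mul_pos hc0 hq0
  have ha1 : c * q < 1 := by nlinarith
  have h1a : 0 < 1 - c * q := by linarith
  have hm : Filter.Tendsto (fun K : ℕ => ((⌊c * K * q⌋₊ : ℝ)) / K) Filter.atTop (nhds (c * q)) :=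
    tendsto_floor_div hq0 hc0
  have hev1 : ∀ᶠ K : ℕ in Filter.atTop, 1 ≤ K := Filter.eventually_ge_atTop 1
  have hA : Filter.Tendsto (fun K : ℕ => ((⌊c * K * q⌋₊ : ℝ) + 1) / K) Filter.atTop
      (nhds (c * q)) := by
    have h := hm.add tendsto_one_div_atTop_nhds_zero_nat
    rw [add_zero] at h
    exact h.congr (fun K => (add_div _ _ _).symm)
  have hB : Filter.Tendsto (fun K : ℕ => ((K : ℝ) - (⌊c * K * q⌋₊ : ℝ) + 1) / K) Filter.atTop
      (nhds (1 - c * q)) := by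
    have h := ((tendsto_const_nhds (x := (1:ℝ)) (f := Filter.atTop (α := ℕ))).sub hm).add
      tendsto_one_div_atTop_nhds_zero_nat
    rw [add_zero] at h
    apply h.congr'
    filter_upwards [hev1] with K hK
    have hK0 : ((K:ℝ)) ≠ 0 := by
      have : (1:ℝ) ≤ K := by exact_mod_cast hK
      linarith
    field_simp
  have hC : Filter.Tendsto (fun K : ℕ => ((K : ℝ) - (⌊c * K * q⌋₊ : ℝ)) / K) Filter.atTop
      (nhds (1 - c * q)) := by
    have h := (tendsto_const_nhds (x := (1:ℝ)) (f := Filter.atTop (α := ℕ))).sub hm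
    apply h.congr'
    filter_upwards [hev1] with K hK
    have hK0 : ((K:ℝ)) ≠ 0 := by
      have : (1:ℝ) ≤ K := by exact_mod_cast hK
      linarith
    field_simp
  have hD : Filter.Tendsto (fun K : ℕ => ((K : ℝ) + 1) / K) Filter.atTop (nhds 1) := by
    have h := (tendsto_const_nhds (x := (1:ℝ)) (f := Filter.atTop (α := ℕ))).add
      tendsto_one_div_atTop_nhds_zero_nat
    rw [add_zero] at h
    apply h.congr'
    filter_upwards [hev1] with K hK
    have hK0 : ((K:ℝ)) ≠ 0 := by
      have : (1:ℝ) ≤ K := by exact_mod_cast hK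
      linarith
    field_simp
  have hev2 : ∀ᶠ K : ℕ in Filter.atTop, (1:ℝ) ≤ c * K * q := by
    have h2 : Filter.Tendsto (fun K : ℕ => c * (K:ℝ) * q) Filter.atTop Filter.atTop := by
      have := (tendsto_natCast_atTop_atTop (R := ℝ)).const_mul_atTop ha0
      exact this.congr (fun K => by ring)
    exact h2.eventually_ge_atTop 1
  have hlow := ((tendsto_log_div_nat.const_mul (-2 : ℝ)).sub
    (tendsto_glog (ne_of_gt ha0) hA)).sub (tendsto_glog (ne_of_gt h1a) hB)
  have hhigh := (((tendsto_glog (one_ne_zero) hD).add tendsto_log_div_nat).sub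
    (tendsto_glog (ne_of_gt ha0) hm)).sub (tendsto_glog (ne_of_gt h1a) hC)
  rw [show (-2 : ℝ) * 0 - c * q * Real.log (c * q) - (1 - c * q) * Real.log (1 - c * q)
      = -(c * q * Real.log (c * q) + (1 - c * q) * Real.log (1 - c * q)) from by ring] at hlow
  rw [show (1 : ℝ) * Real.log 1 + 0 - c * q * Real.log (c * q)
        - (1 - c * q) * Real.log (1 - c * q)
      = -(c * q * Real.log (c * q) + (1 - c * q) * Real.log (1 - c * q)) from by
    rw [Real.log_one]; ring] at hhigh
  apply tendsto_of_tendsto_of_tendsto_of_le_of_le' hlow hhigh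
  · -- lower bound
    filter_upwards [hev1, hev2] with K hK1 hK2
    have hK0 : (0:ℝ) < K := by exact_mod_cast hK1
    have hr0 : (0:ℝ) ≤ c * K * q := by positivity
    set M := ⌊c * K * q⌋₊ with hM
    have hmr : (M : ℝ) ≤ c * K * q := Nat.floor_le hr0
    have hmK : M < K := by
      have hcq : c * q < 1 := ha1
      have h1 : c * K * q < K := by nlinarith [mul_pos (sub_pos.mpr hcq) hK0]
      have : (M:ℝ) < K := lt_of_le_of_lt hmr h1
      exact_mod_cast this
    have hν : ((K - M : ℕ) : ℝ) = (K:ℝ) - (M:ℝ) := by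
      push_cast [Nat.cast_sub hmK.le]; ring
    have hν1 : (1:ℝ) ≤ (K:ℝ) - (M:ℝ) := by
      have : M + 1 ≤ K := hmK
      have : ((M:ℝ) + 1) ≤ K := by exact_mod_cast this
      linarith
    have hlogC : Real.log ((K.choose M : ℕ) : ℝ) =
        Real.log K.factorial - Real.log M.factorial - Real.log (K - M).factorial := by
      have h := Nat.choose_mul_factorial_mul_factorial hmK.le
      have hcast : ((K.choose M : ℕ):ℝ) * (M.factorial : ℝ) * ((K - M).factorial : ℝ)
          = (K.factorial : ℝ) := by exact_mod_cast congrArg (Nat.cast (R := ℝ)) h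
      have c1 : (0:ℝ) < (K.choose M : ℕ) := by exact_mod_cast Nat.choose_pos hmK.le
      have c2 : (0:ℝ) < (M.factorial : ℝ) := by exact_mod_cast M.factorial_pos
      have c3 : (0:ℝ) < ((K - M).factorial : ℝ) := by exact_mod_cast (K - M).factorial_pos
      rw [← hcast, Real.log_mul (by positivity) (ne_of_gt c3),
        Real.log_mul (ne_of_gt c1) (ne_of_gt c2)]
      ring
    have hLK := log_factorial_lb K
    have hUm := log_factorial_ub M
    have hUν := log_factorial_ub (K - M)
    rw [hν] at hUν
    have id1 : (-2:ℝ) * (Real.log K / K) - (((M:ℝ) + 1)/K) * Real.log (((M:ℝ) + 1)/K)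
          - (((K:ℝ) - (M:ℝ) + 1)/K) * Real.log (((K:ℝ) - (M:ℝ) + 1)/K)
        = ((K:ℝ) * Real.log K - ((M:ℝ)+1) * Real.log ((M:ℝ)+1)
            - ((K:ℝ)-(M:ℝ)+1) * Real.log ((K:ℝ)-(M:ℝ)+1)) / K := by
      rw [Real.log_div (by positivity) (ne_of_gt hK0),
        Real.log_div (ne_of_gt (by linarith : (0:ℝ) < (K:ℝ) - (M:ℝ) + 1)) (ne_of_gt hK0)]
      field_simp
      ring
    rw [id1, div_le_div_iff_of_pos_right hK0, hlogC]
    have hsum : (M:ℝ) + ((K:ℝ) - (M:ℝ)) = K := by ring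
    linarith [hLK, hUm, hUν]
  · -- upper bound
    filter_upwards [hev1, hev2] with K hK1 hK2
    have hK0 : (0:ℝ) < K := by exact_mod_cast hK1
    have hr0 : (0:ℝ) ≤ c * K * q := by positivity
    set M := ⌊c * K * q⌋₊ with hM
    have hm1 : 1 ≤ M := Nat.le_floor (by exact_mod_cast hK2)
    have hμ1 : (1:ℝ) ≤ (M:ℝ) := by exact_mod_cast hm1
    have hmr : (M : ℝ) ≤ c * K * q := Nat.floor_le hr0
    have hmK : M < K := by
      have h1 : c * K * q < K := by nlinarith [mul_pos (sub_pos.mpr ha1) hK0]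
      have : (M:ℝ) < K := lt_of_le_of_lt hmr h1
      exact_mod_cast this
    have hν : ((K - M : ℕ) : ℝ) = (K:ℝ) - (M:ℝ) := by
      push_cast [Nat.cast_sub hmK.le]; ring
    have hν1 : (1:ℝ) ≤ (K:ℝ) - (M:ℝ) := by
      have : M + 1 ≤ K := hmK
      have : ((M:ℝ) + 1) ≤ K := by exact_mod_cast this
      linarith
    have hlogC : Real.log ((K.choose M : ℕ) : ℝ) =
        Real.log K.factorial - Real.log M.factorial - Real.log (K - M).factorial := by
      have h := Nat.choose_mul_factorial_mul_factorial hmK.le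
      have hcast : ((K.choose M : ℕ):ℝ) * (M.factorial : ℝ) * ((K - M).factorial : ℝ)
          = (K.factorial : ℝ) := by exact_mod_cast congrArg (Nat.cast (R := ℝ)) h
      have c1 : (0:ℝ) < (K.choose M : ℕ) := by exact_mod_cast Nat.choose_pos hmK.le
      have c2 : (0:ℝ) < (M.factorial : ℝ) := by exact_mod_cast M.factorial_pos
      have c3 : (0:ℝ) < ((K - M).factorial : ℝ) := by exact_mod_cast (K - M).factorial_pos
      rw [← hcast, Real.log_mul (by positivity) (ne_of_gt c3),
        Real.log_mul (ne_of_gt c1) (ne_of_gt c2)]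
      ring
    have hUK := log_factorial_ub K
    have hLm := log_factorial_lb M
    have hLν := log_factorial_lb (K - M)
    rw [hν] at hLν
    have id2 : (((K:ℝ) + 1)/K) * Real.log (((K:ℝ) + 1)/K) + Real.log K / K
          - ((M:ℝ)/K) * Real.log ((M:ℝ)/K)
          - (((K:ℝ) - (M:ℝ))/K) * Real.log (((K:ℝ) - (M:ℝ))/K)
        = (((K:ℝ)+1) * Real.log ((K:ℝ)+1) - (M:ℝ) * Real.log (M:ℝ)
            - ((K:ℝ)-(M:ℝ)) * Real.log ((K:ℝ)-(M:ℝ))) / K := by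
      rw [Real.log_div (by positivity) (ne_of_gt hK0),
        Real.log_div (ne_of_gt (by linarith : (0:ℝ) < (M:ℝ))) (ne_of_gt hK0),
        Real.log_div (ne_of_gt (by linarith : (0:ℝ) < (K:ℝ) - (M:ℝ))) (ne_of_gt hK0)]
      field_simp
      ring
    rw [id2, div_le_div_iff_of_pos_right hK0, hlogC]
    have hsum : (M:ℝ) + ((K:ℝ) - (M:ℝ)) = K := by ring
    linarith [hUK, hLm, hLν]

lemma tendsto_log_binomCdf {q c : ℝ} (hq0 : 0 < q) (hq1 : q < 1) (hc0 : 0 < c) (hc1 : c < 1) :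
    Filter.Tendsto (fun K : ℕ => Real.log (binomCdf q K (c * K * q)) / K) Filter.atTop
      (nhds (-klBernoulli (c * q) q)) := by
  have ha0 : 0 < c * q := mul_pos hc0 hq0
  have ha1 : c * q < 1 := by nlinarith
  have h1a : 0 < 1 - c * q := by linarith
  have h1q : 0 < 1 - q := by linarith
  have hev1 : ∀ᶠ K : ℕ in Filter.atTop, 1 ≤ K := Filter.eventually_ge_atTop 1
  have hm : Filter.Tendsto (fun K : ℕ => ((⌊c * K * q⌋₊ : ℝ)) / K) Filter.atTop (nhds (c * q)) :=
    tendsto_floor_div hq0 hc0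
  have hC : Filter.Tendsto (fun K : ℕ => ((K : ℝ) - (⌊c * K * q⌋₊ : ℝ)) / K) Filter.atTop
      (nhds (1 - c * q)) := by
    have h := (tendsto_const_nhds (x := (1:ℝ)) (f := Filter.atTop (α := ℕ))).sub hm
    apply h.congr'
    filter_upwards [hev1] with K hK
    have hK0 : ((K:ℝ)) ≠ 0 := by
      have : (1:ℝ) ≤ K := by exact_mod_cast hK
      linarith
    field_simp
  -- limit of log of the single dominant term
  have hterm : Filter.Tendsto (fun K : ℕ => Real.log (bterm q K ⌊c * K * q⌋₊) / K)
      Filter.atTop (nhds (-klBernoulli (c * q) q)) := by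
    have hbuilt := ((tendsto_log_choose hq0 hq1 hc0 hc1).add
      (hm.mul_const (Real.log q))).add (hC.mul_const (Real.log (1 - q)))
    have hval : -(c * q * Real.log (c * q) + (1 - c * q) * Real.log (1 - c * q))
          + c * q * Real.log q + (1 - c * q) * Real.log (1 - q)
        = -klBernoulli (c * q) q := by
      unfold klBernoulli
      rw [Real.log_div (ne_of_gt ha0) (ne_of_gt hq0),
        Real.log_div (ne_of_gt h1a) (ne_of_gt h1q)]
      ring
    rw [hval] at hbuilt
    apply hbuilt.congr'
    filter_upwards [hev1] with K hK1
    have hK0 : (0:ℝ) < K := by exact_mod_cast hK1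
    have hr0 : (0:ℝ) ≤ c * K * q := by positivity
    set M := ⌊c * K * q⌋₊ with hM
    have hmr : (M : ℝ) ≤ c * K * q := Nat.floor_le hr0
    have hmK : M < K := by
      have h1 : c * K * q < K := by nlinarith [mul_pos (sub_pos.mpr ha1) hK0]
      have : (M:ℝ) < K := lt_of_le_of_lt hmr h1
      exact_mod_cast this
    have hν : ((K - M : ℕ) : ℝ) = (K:ℝ) - (M:ℝ) := by
      push_cast [Nat.cast_sub hmK.le]; ring
    have c1 : (0:ℝ) < (K.choose M : ℕ) := by exact_mod_cast Nat.choose_pos hmK.le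
    have hlogt : Real.log (bterm q K M) = Real.log ((K.choose M : ℕ) : ℝ)
        + (M:ℝ) * Real.log q + ((K:ℝ) - (M:ℝ)) * Real.log (1 - q) := by
      unfold bterm
      rw [Real.log_mul (by positivity) (by positivity),
        Real.log_mul (ne_of_gt c1) (by positivity),
        Real.log_pow, Real.log_pow, ← hν]
    rw [hlogt]
    field_simp
  -- log (K+1) / K → 0
  have hD : Filter.Tendsto (fun K : ℕ => ((K : ℝ) + 1) / K) Filter.atTop (nhds 1) := by
    have h := (tendsto_const_nhds (x := (1:ℝ)) (f := Filter.atTop (α := ℕ))).add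
      tendsto_one_div_atTop_nhds_zero_nat
    rw [add_zero] at h
    apply h.congr'
    filter_upwards [hev1] with K hK
    have hK0 : ((K:ℝ)) ≠ 0 := by
      have : (1:ℝ) ≤ K := by exact_mod_cast hK
      linarith
    field_simp
  have hlogK1 : Filter.Tendsto (fun K : ℕ => Real.log ((K:ℝ) + 1) / K) Filter.atTop (nhds 0) := by
    have h0 : Filter.Tendsto (fun K : ℕ => Real.log ((K:ℝ) + 1) / ((K:ℝ) + 1)) Filter.atTop
        (nhds 0) :=
      (Real.isLittleO_log_id_atTop.tendsto_div_nhds_zero).comp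
        (Filter.tendsto_atTop_add_const_right _ 1 tendsto_natCast_atTop_atTop)
    have h := h0.mul hD
    rw [zero_mul] at h
    apply h.congr'
    filter_upwards [hev1] with K hK
    have hK0 : ((K:ℝ)) ≠ 0 := by
      have : (1:ℝ) ≤ K := by exact_mod_cast hK
      linarith
    field_simp
  have hupperlim := hterm.add hlogK1
  rw [add_zero] at hupperlim
  apply tendsto_of_tendsto_of_tendsto_of_le_of_le' hterm hupperlim
  · filter_upwards [hev1] with K hK1
    have hK0 : (0:ℝ) < K := by exact_mod_cast hK1
    have hr0 : (0:ℝ) ≤ c * K * q := by positivity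
    set M := ⌊c * K * q⌋₊ with hM
    have hmr : (M : ℝ) ≤ c * K * q := Nat.floor_le hr0
    have hmK : M < K := by
      have h1 : c * K * q < K := by nlinarith [mul_pos (sub_pos.mpr ha1) hK0]
      have : (M:ℝ) < K := lt_of_le_of_lt hmr h1
      exact_mod_cast this
    have hstep : ∀ k, k < M → bterm q K k ≤ bterm q K (k+1) := by
      intro k hk
      have hkK : k < K := lt_trans hk hmK
      apply bterm_step hq0 hq1 hkK
      have hk1 : (k:ℝ) + 1 ≤ (M:ℝ) := by exact_mod_cast hk
      have hkr : (k:ℝ) + 1 ≤ c * K * q := le_trans hk1 hmr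
      have hcKq : c * K * q ≤ K * q := by
        nlinarith [mul_nonneg (mul_nonneg (sub_nonneg.mpr hc1.le)
          (Nat.cast_nonneg K : (0:ℝ) ≤ K)) hq0.le]
      nlinarith [hkr, hcKq, hq0]
    have hmono := bterm_mono hstep
    have hpos : ∀ k, k ≤ K → 0 < bterm q K k := fun k hk => bterm_pos hq0 hq1 hk
    have hsand := binomCdf_sandwich hq0 hq1 hc0 hc1 hK1 hmono hpos
    have htpos : 0 < bterm q K M := hpos M hmK.le
    have := Real.log_le_log htpos hsand.1
    exact (div_le_div_iff_of_pos_right hK0).mpr this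
  · filter_upwards [hev1] with K hK1
    have hK0 : (0:ℝ) < K := by exact_mod_cast hK1
    have hr0 : (0:ℝ) ≤ c * K * q := by positivity
    set M := ⌊c * K * q⌋₊ with hM
    have hmr : (M : ℝ) ≤ c * K * q := Nat.floor_le hr0
    have hmK : M < K := by
      have h1 : c * K * q < K := by nlinarith [mul_pos (sub_pos.mpr ha1) hK0]
      have : (M:ℝ) < K := lt_of_le_of_lt hmr h1
      exact_mod_cast this
    have hstep : ∀ k, k < M → bterm q K k ≤ bterm q K (k+1) := by
      intro k hk
      have hkK : k < K := lt_trans hk hmK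
      apply bterm_step hq0 hq1 hkK
      have hk1 : (k:ℝ) + 1 ≤ (M:ℝ) := by exact_mod_cast hk
      have hkr : (k:ℝ) + 1 ≤ c * K * q := le_trans hk1 hmr
      have hcKq : c * K * q ≤ K * q := by
        nlinarith [mul_nonneg (mul_nonneg (sub_nonneg.mpr hc1.le)
          (Nat.cast_nonneg K : (0:ℝ) ≤ K)) hq0.le]
      nlinarith [hkr, hcKq, hq0]
    have hmono := bterm_mono hstep
    have hpos : ∀ k, k ≤ K → 0 < bterm q K k := fun k hk => bterm_pos hq0 hq1 hk
    have hsand := binomCdf_sandwich hq0 hq1 hc0 hc1 hK1 hmono hpos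
    have htpos : 0 < bterm q K M := hpos M hmK.le
    have hcdfpos : 0 < binomCdf q K (c * K * q) := lt_of_lt_of_le htpos hsand.1
    have hlog := Real.log_le_log hcdfpos hsand.2
    rw [Real.log_mul (by positivity : (K:ℝ) + 1 ≠ 0) (ne_of_gt htpos)] at hlog
    rw [← add_div]
    apply (div_le_div_iff_of_pos_right hK0).mpr
    linarith

/-- For `q ∈ (0,1)`, `0 < c₁ < c₂ < 1`, and `Z_K ∼ Binomial(K,q)`, the two-point
correlation dimension at radii `c₁Kq` and `c₂Kq`,
`cd_R(K) = (log P(Z_K ≤ c₂Kq) - log P(Z_K ≤ c₁Kq)) / (log(c₂Kq) - log(c₁Kq))`,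
satisfies `cd_R(K)/K → (D(c₁q ‖ q) - D(c₂q ‖ q)) / (log c₂ - log c₁)` as `K → ∞`. -/
theorem correlation_dimension_mean_radii (q c₁ c₂ : ℝ) (hq : q ∈ Set.Ioo (0 : ℝ) 1)
    (hc₁ : 0 < c₁) (hc₁₂ : c₁ < c₂) (hc₂ : c₂ < 1)
    (cdR : ℕ → ℝ)
    (hcdR : ∀ K : ℕ, cdR K =
      (Real.log (binomCdf q K (c₂ * K * q)) - Real.log (binomCdf q K (c₁ * K * q))) /
        (Real.log (c₂ * K * q) - Real.log (c₁ * K * q))) :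
    Filter.Tendsto (fun K : ℕ => cdR K / K) Filter.atTop
      (nhds ((klBernoulli (c₁ * q) q - klBernoulli (c₂ * q) q) /
        (Real.log c₂ - Real.log c₁))) := by
  obtain ⟨hq0, hq1⟩ := hq
  have hc₂0 : 0 < c₂ := lt_trans hc₁ hc₁₂
  have hc₁1 : c₁ < 1 := lt_trans hc₁₂ hc₂
  have h1 := tendsto_log_binomCdf hq0 hq1 hc₁ hc₁1
  have h2 := tendsto_log_binomCdf hq0 hq1 hc₂0 hc₂
  have hd : 0 < Real.log c₂ - Real.log c₁ :=
    sub_pos.mpr (Real.log_lt_log hc₁ hc₁₂)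
  have T := (h2.sub h1).div_const (Real.log c₂ - Real.log c₁)
  have hval : (-klBernoulli (c₂ * q) q - -klBernoulli (c₁ * q) q)
        / (Real.log c₂ - Real.log c₁)
      = (klBernoulli (c₁ * q) q - klBernoulli (c₂ * q) q) / (Real.log c₂ - Real.log c₁) := by
    ring
  rw [hval] at T
  apply T.congr'
  filter_upwards [Filter.eventually_ge_atTop 1] with K hK1
  have hK0 : (0:ℝ) < K := by exact_mod_cast hK1
  have hl2 : Real.log (c₂ * K * q) = Real.log c₂ + Real.log K + Real.log q := by
    rw [Real.log_mul (by positivity) (ne_of_gt hq0), Real.log_mul (ne_of_gt hc₂0) (ne_of_gt hK0)]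
  have hl1 : Real.log (c₁ * K * q) = Real.log c₁ + Real.log K + Real.log q := by
    rw [Real.log_mul (by positivity) (ne_of_gt hq0), Real.log_mul (ne_of_gt hc₁) (ne_of_gt hK0)]
  rw [hcdR K, hl2, hl1]
  have hden : Real.log c₂ + Real.log K + Real.log q - (Real.log c₁ + Real.log K + Real.log q)
      = Real.log c₂ - Real.log c₁ := by ring
  rw [hden, ← sub_div, div_div, div_div, mul_comm ((K:ℝ)) (Real.log c₂ - Real.log c₁)]
end

section
/- Let (X₁, X₂) be a random vector with values in {0,1}², with marginals p₁ = P(X₁ = 1), p₂ = P(X₂ = 1), and covariance c = P(X₁ = 1, X₂ = 1) - p₁p₂. Let (Y₁, Y₂) be an independent copy of (X₁, X₂). Then the covariance of the disagreement indicators Z₁ = 1{X₁ ≠ Y₁} and Z₂ = 1{X₂ ≠ Y₂} satisfies P(X₁ ≠ Y₁, X₂ ≠ Y₂) - P(X₁ ≠ Y₁)·P(X₂ ≠ Y₂) = 2c(1 - 2p₁)(1 - 2p₂) + 4c². -/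
/-!
Both sides only depend on the law `q` of `X` on the four cells of `{0,1}²`: by independence and
identical distribution, every event about `(X, Y)` has probability `∑ q s * q t` over the pairs
of cells `(s, t)` realising it. The identity is then a polynomial identity in the four cell
probabilities, which holds once one of them is eliminated through `∑ q = 1`.
-/

open MeasureTheory ProbabilityTheory Finset

section FiniteRange

variable {Ω α β : Type*} [MeasurableSpace Ω] {μ : Measure Ω}
  [MeasurableSpace α] [MeasurableSingletonClass α] [MeasurableSpace β] [MeasurableSingletonClass β]

theorem measureReal_setOf_eq_sum_fiber [IsFiniteMeasure μ] [Fintype α] {X : Ω → α}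
    (hX : Measurable X) (P : α → Prop) [DecidablePred P] :
    μ.real {ω | P (X ω)} = ∑ s with P s, μ.real (X ⁻¹' {s}) := by
  rw [sum_measureReal_preimage_singleton _ fun s _ ↦ hX (measurableSet_singleton s)]
  congr 1
  ext ω
  simp

namespace ProbabilityTheory.IndepFun

theorem measureReal_preimage_singleton_pair {X : Ω → α} {Y : Ω → β} (h : IndepFun X Y μ)
    (s : α) (t : β) :
    μ.real ((fun ω ↦ (X ω, Y ω)) ⁻¹' {(s, t)}) = μ.real (X ⁻¹' {s}) * μ.real (Y ⁻¹' {t}) := by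
  have hpre : (fun ω ↦ (X ω, Y ω)) ⁻¹' {(s, t)} = X ⁻¹' {s} ∩ Y ⁻¹' {t} := by
    ext ω
    simp
  rw [hpre, measureReal_def, h.measure_inter_preimage_eq_mul _ _ (measurableSet_singleton s)
    (measurableSet_singleton t), ENNReal.toReal_mul, measureReal_def, measureReal_def]

theorem measureReal_setOf_eq_sum [IsFiniteMeasure μ] [Fintype α] [Fintype β] {X : Ω → α}
    {Y : Ω → β} (hX : Measurable X) (hY : Measurable Y) (h : IndepFun X Y μ)
    (P : α → β → Prop) [∀ s t, Decidable (P s t)] :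
    μ.real {ω | P (X ω) (Y ω)} =
      ∑ st : α × β with P st.1 st.2, μ.real (X ⁻¹' {st.1}) * μ.real (Y ⁻¹' {st.2}) := by
  rw [measureReal_setOf_eq_sum_fiber (hX.prodMk hY) fun st : α × β ↦ P st.1 st.2]
  exact sum_congr rfl fun st _ ↦ h.measureReal_preimage_singleton_pair st.1 st.2

end ProbabilityTheory.IndepFun

end FiniteRange

theorem disagreement_covariance_of_cell_probabilities (q : Bool × Bool → ℝ) (hq : ∑ s, q s = 1)
    (p₁ p₂ c : ℝ) (hp₁ : p₁ = ∑ s with s.1 = true, q s) (hp₂ : p₂ = ∑ s with s.2 = true, q s)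
    (hc : c = ∑ s with s.1 = true ∧ s.2 = true, q s - p₁ * p₂) :
    ∑ st : (Bool × Bool) × (Bool × Bool) with st.1.1 ≠ st.2.1 ∧ st.1.2 ≠ st.2.2, q st.1 * q st.2
      - (∑ st : (Bool × Bool) × (Bool × Bool) with st.1.1 ≠ st.2.1, q st.1 * q st.2) *
        ∑ st : (Bool × Bool) × (Bool × Bool) with st.1.2 ≠ st.2.2, q st.1 * q st.2 =
    2 * c * (1 - 2 * p₁) * (1 - 2 * p₂) + 4 * c ^ 2 := by
  simp only [sum_filter, Fintype.sum_prod_type, Fintype.sum_bool, ne_eq, Bool.true_eq_false,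
    Bool.false_eq_true, not_true_eq_false, not_false_eq_true, and_true, and_false, if_true,
    if_false] at hq hp₁ hp₂ hc ⊢
  have hff : q (false, false) = 1 - q (true, true) - q (true, false) - q (false, true) := by
    linarith
  subst hp₁ hp₂ hc
  rw [hff]
  ring

/-- Let `(X₁,X₂)` be a random vector in `{0,1}²` with marginals `p₁, p₂` and covariance
`c`, and let `(Y₁,Y₂)` be an independent copy. Then the covariance of the disagreement
indicators satisfies
`P(X₁≠Y₁, X₂≠Y₂) - P(X₁≠Y₁)·P(X₂≠Y₂) = 2c(1-2p₁)(1-2p₂) + 4c²`. -/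
theorem disagreement_covariance {Ω : Type*} [MeasurableSpace Ω] (μ : Measure Ω)
    [IsProbabilityMeasure μ] (X Y : Ω → Bool × Bool)
    (hXm : Measurable X) (hYm : Measurable Y)
    (hid : Measure.map X μ = Measure.map Y μ)
    (hindep : IndepFun X Y μ)
    (p₁ p₂ c : ℝ)
    (hp₁ : p₁ = (μ {ω | (X ω).1 = true}).toReal)
    (hp₂ : p₂ = (μ {ω | (X ω).2 = true}).toReal)
    (hc : c = (μ {ω | (X ω).1 = true ∧ (X ω).2 = true}).toReal - p₁ * p₂) :
    (μ {ω | (X ω).1 ≠ (Y ω).1 ∧ (X ω).2 ≠ (Y ω).2}).toReal -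
      (μ {ω | (X ω).1 ≠ (Y ω).1}).toReal * (μ {ω | (X ω).2 ≠ (Y ω).2}).toReal =
    2 * c * (1 - 2 * p₁) * (1 - 2 * p₂) + 4 * c ^ 2 := by
  have hlaw : IdentDistrib X Y μ μ := ⟨hXm.aemeasurable, hYm.aemeasurable, hid⟩
  have hY : ∀ t, μ.real (Y ⁻¹' {t}) = μ.real (X ⁻¹' {t}) := fun t ↦
    congrArg ENNReal.toReal (hlaw.measure_mem_eq (measurableSet_singleton t)).symm
  have hq : ∑ s, μ.real (X ⁻¹' {s}) = 1 := by
    rw [sum_measureReal_preimage_singleton _ fun s _ ↦ hXm (measurableSet_singleton s)]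
    simp
  simp only [← measureReal_def] at hp₁ hp₂ hc ⊢
  rw [measureReal_setOf_eq_sum_fiber hXm fun s ↦ s.1 = true] at hp₁
  rw [measureReal_setOf_eq_sum_fiber hXm fun s ↦ s.2 = true] at hp₂
  rw [measureReal_setOf_eq_sum_fiber hXm fun s ↦ s.1 = true ∧ s.2 = true] at hc
  rw [hindep.measureReal_setOf_eq_sum hXm hYm fun s t ↦ s.1 ≠ t.1 ∧ s.2 ≠ t.2,
    hindep.measureReal_setOf_eq_sum hXm hYm fun s t ↦ s.1 ≠ t.1,
    hindep.measureReal_setOf_eq_sum hXm hYm fun s t ↦ s.2 ≠ t.2]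
  simp only [hY]
  exact disagreement_covariance_of_cell_probabilities _ hq p₁ p₂ c hp₁ hp₂ hc
end

section
/- Let X = (X₁,...,X_K) be a random vector with values in {0,1}^K such that p_i = P(X_i = 1) ≤ 1/2 for every i and every pair of coordinates is nonnegatively correlated, i.e., P(X_i = 1, X_j = 1) ≥ p_i·p_j for all i ≠ j. Let Y be an independent copy of X, and let Z = Σᵢ 1{X_i ≠ Y_i} be the Hamming distance between X and Y. Then Var(Z) ≥ Σᵢ q_i(1 - q_i), where q_i = 2p_i(1 - p_i); that is, the variance of the pairwise distance is at least its value for a dataset with the same margins but independent columns. -/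
open MeasureTheory ProbabilityTheory

set_option maxHeartbeats 2000000 in
/-- Let `X` be a random vector in `{0,1}^K` with marginals `pᵢ ≤ 1/2` and nonnegatively
correlated coordinates, and let `Y` be an independent copy of `X`. Then the Hamming
distance `Z = Σᵢ 1{Xᵢ ≠ Yᵢ}` satisfies `Var(Z) ≥ Σᵢ qᵢ(1-qᵢ)` with `qᵢ = 2pᵢ(1-pᵢ)`,
i.e. the variance is at least its value for independent columns with the same margins. -/
theorem variance_ge_independent_case {Ω : Type*} [MeasurableSpace Ω] (μ : Measure Ω)
    [IsProbabilityMeasure μ] (K : ℕ) (X Y : Ω → Fin K → Bool)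
    (hXm : Measurable X) (hYm : Measurable Y)
    (hid : Measure.map X μ = Measure.map Y μ)
    (hindep : IndepFun X Y μ)
    (p : Fin K → ℝ) (hp : ∀ i, p i = (μ {ω | X ω i = true}).toReal)
    (hple : ∀ i, p i ≤ 1 / 2)
    (hposcorr : ∀ i j, i ≠ j →
      p i * p j ≤ (μ {ω | X ω i = true ∧ X ω j = true}).toReal)
    (q : Fin K → ℝ) (hq : ∀ i, q i = 2 * p i * (1 - p i))
    (Z : Ω → ℝ) (hZ : ∀ ω, Z ω = ∑ i, if X ω i ≠ Y ω i then (1 : ℝ) else 0) :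
    ∑ i, q i * (1 - q i) ≤ variance Z μ := by
  classical
  -- measurable target sets
  set S1 : Fin K → Bool → Set (Fin K → Bool) := fun i a => {f | f i = a} with hS1
  have hS1m : ∀ i a, MeasurableSet (S1 i a) := by
    intro i a
    have : S1 i a = (fun f : Fin K → Bool => f i) ⁻¹' {a} := rfl
    rw [this]; exact (measurable_pi_apply i) (measurableSet_singleton a)
  set S2 : Fin K → Fin K → Bool → Bool → Set (Fin K → Bool) :=
    fun i j a b => {f | f i = a ∧ f j = b} with hS2
  have hS2m : ∀ i j a b, MeasurableSet (S2 i j a b) := by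
    intro i j a b
    have : S2 i j a b = S1 i a ∩ S1 j b := rfl
    rw [this]; exact (hS1m i a).inter (hS1m j b)
  -- the Y-preimages have the same measure as X-preimages
  have hYX : ∀ S : Set (Fin K → Bool), MeasurableSet S → μ (Y ⁻¹' S) = μ (X ⁻¹' S) := by
    intro S hS
    rw [← Measure.map_apply hYm hS, ← hid, Measure.map_apply hXm hS]
  -- product formula
  have hprod : ∀ S T : Set (Fin K → Bool), MeasurableSet S → MeasurableSet T →
      μ (X ⁻¹' S ∩ Y ⁻¹' T) = μ (X ⁻¹' S) * μ (X ⁻¹' T) := by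
    intro S T hS hT
    rw [hindep.measure_inter_preimage_eq_mul S T hS hT, hYX T hT]
  -- real-valued probabilities
  set m1 : Fin K → Bool → ℝ := fun i a => (μ (X ⁻¹' S1 i a)).toReal with hm1
  set m2 : Fin K → Fin K → Bool → Bool → ℝ :=
    fun i j a b => (μ (X ⁻¹' S2 i j a b)).toReal with hm2
  have hm1t : ∀ i, m1 i true = p i := by
    intro i; rw [hp i]; rfl
  have hm1f : ∀ i, m1 i false = 1 - p i := by
    intro i
    have hc : X ⁻¹' S1 i false = (X ⁻¹' S1 i true)ᶜ := by
      ext ω; simp [S1]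
    show (μ (X ⁻¹' S1 i false)).toReal = 1 - p i
    rw [hc, measure_compl (hXm (hS1m i true)) (measure_ne_top μ _), measure_univ,
      ENNReal.toReal_sub_of_le prob_le_one ENNReal.one_ne_top, ENNReal.toReal_one, ← hm1t i]
  -- marginal identities
  have hmar1 : ∀ i j a, m2 i j a true + m2 i j a false = m1 i a := by
    intro i j a
    have hu : X ⁻¹' S1 i a = X ⁻¹' S2 i j a true ∪ X ⁻¹' S2 i j a false := by
      ext ω
      simp only [Set.mem_preimage, Set.mem_union, hS1, hS2, Set.mem_setOf_eq]
      cases h : X ω j <;> tauto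
    have hd : Disjoint (X ⁻¹' S2 i j a true) (X ⁻¹' S2 i j a false) := by
      rw [Set.disjoint_left]
      intro ω h1 h2
      simp only [Set.mem_preimage, hS2, Set.mem_setOf_eq] at h1 h2
      rw [h1.2] at h2; simp at h2
    show (μ (X ⁻¹' S2 i j a true)).toReal + (μ (X ⁻¹' S2 i j a false)).toReal
        = (μ (X ⁻¹' S1 i a)).toReal
    rw [hu, measure_union hd (hXm (hS2m i j a false)),
      ENNReal.toReal_add (measure_ne_top μ _) (measure_ne_top μ _)]
  have hmar2 : ∀ i j b, m2 i j true b + m2 i j false b = m1 j b := by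
    intro i j b
    have hu : X ⁻¹' S1 j b = X ⁻¹' S2 i j true b ∪ X ⁻¹' S2 i j false b := by
      ext ω
      simp only [Set.mem_preimage, Set.mem_union, hS1, hS2, Set.mem_setOf_eq]
      cases h : X ω i <;> tauto
    have hd : Disjoint (X ⁻¹' S2 i j true b) (X ⁻¹' S2 i j false b) := by
      rw [Set.disjoint_left]
      intro ω h1 h2
      simp only [Set.mem_preimage, hS2, Set.mem_setOf_eq] at h1 h2
      rw [h1.1] at h2; simp at h2
    show (μ (X ⁻¹' S2 i j true b)).toReal + (μ (X ⁻¹' S2 i j false b)).toReal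
        = (μ (X ⁻¹' S1 j b)).toReal
    rw [hu, measure_union hd (hXm (hS2m i j false b)),
      ENNReal.toReal_add (measure_ne_top μ _) (measure_ne_top μ _)]
  have hr : ∀ i j, i ≠ j → p i * p j ≤ m2 i j true true := fun i j hij => hposcorr i j hij
  -- the disagreement events
  set A : Fin K → Set Ω := fun i => {ω | X ω i ≠ Y ω i} with hA
  have hAeq : ∀ i, A i = ⋃ a : Bool, (X ⁻¹' S1 i a ∩ Y ⁻¹' S1 i (!a)) := by
    intro i
    ext ω
    simp only [hA, Set.mem_setOf_eq, Set.mem_iUnion, Set.mem_inter_iff, Set.mem_preimage, hS1]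
    constructor
    · intro h
      refine ⟨X ω i, rfl, ?_⟩
      cases hx : X ω i <;> cases hy : Y ω i <;> simp_all
    · rintro ⟨a, h1, h2⟩
      rw [h1, h2]
      cases a <;> simp
  have hAmeas : ∀ i, MeasurableSet (A i) := by
    intro i
    rw [hAeq i]
    exact MeasurableSet.iUnion fun a => (hXm (hS1m i a)).inter (hYm (hS1m i (!a)))
  have hAq : ∀ i, (μ (A i)).toReal = q i := by
    intro i
    have hdisj : Pairwise (Function.onFun Disjoint fun a : Bool =>
        X ⁻¹' S1 i a ∩ Y ⁻¹' S1 i (!a)) := by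
      intro a b hab
      rw [Function.onFun, Set.disjoint_left]
      intro ω h1 h2
      simp only [Set.mem_inter_iff, Set.mem_preimage, hS1, Set.mem_setOf_eq] at h1 h2
      exact hab (h1.1.symm.trans h2.1)
    rw [hAeq i, measure_iUnion hdisj (fun a => (hXm (hS1m i a)).inter (hYm (hS1m i (!a)))),
      tsum_fintype, ENNReal.toReal_sum (fun a _ => measure_ne_top μ _)]
    have : ∀ a : Bool, (μ (X ⁻¹' S1 i a ∩ Y ⁻¹' S1 i (!a))).toReal = m1 i a * m1 i (!a) := by
      intro a
      rw [hprod _ _ (hS1m i a) (hS1m i (!a)), ENNReal.toReal_mul]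
    simp only [this]
    rw [Fintype.sum_bool]
    simp only [Bool.not_true, Bool.not_false]
    rw [hm1t, hm1f, hq i]
    ring
  -- decomposition of pairwise intersections
  have hABq : ∀ i j, (μ (A i ∩ A j)).toReal
      = ∑ ab : Bool × Bool, m2 i j ab.1 ab.2 * m2 i j (!ab.1) (!ab.2) := by
    intro i j
    have heq : A i ∩ A j = ⋃ ab : Bool × Bool,
        (X ⁻¹' S2 i j ab.1 ab.2 ∩ Y ⁻¹' S2 i j (!ab.1) (!ab.2)) := by
      ext ω
      simp only [hA, Set.mem_inter_iff, Set.mem_setOf_eq, Set.mem_iUnion, Set.mem_preimage,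
        hS2, Prod.exists]
      constructor
      · rintro ⟨h1, h2⟩
        refine ⟨X ω i, X ω j, ⟨rfl, rfl⟩, ?_, ?_⟩
        · cases hx : X ω i <;> cases hy : Y ω i <;> simp_all
        · cases hx : X ω j <;> cases hy : Y ω j <;> simp_all
      · rintro ⟨a, b, ⟨ha, hb⟩, h1, h2⟩
        subst ha; subst hb
        constructor
        · rw [h1]; cases X ω i <;> simp
        · rw [h2]; cases X ω j <;> simp
    have hdisj : Pairwise (Function.onFun Disjoint fun ab : Bool × Bool =>
        X ⁻¹' S2 i j ab.1 ab.2 ∩ Y ⁻¹' S2 i j (!ab.1) (!ab.2)) := by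
      intro ab cd hab
      rw [Function.onFun, Set.disjoint_left]
      intro ω h1 h2
      simp only [Set.mem_inter_iff, Set.mem_preimage, hS2, Set.mem_setOf_eq] at h1 h2
      exact hab (Prod.ext (h1.1.1.symm.trans h2.1.1) (h1.1.2.symm.trans h2.1.2))
    rw [heq, measure_iUnion hdisj
        (fun ab => (hXm (hS2m i j ab.1 ab.2)).inter (hYm (hS2m i j (!ab.1) (!ab.2)))),
      tsum_fintype, ENNReal.toReal_sum (fun ab _ => measure_ne_top μ _)]
    refine Finset.sum_congr rfl fun ab _ => ?_
    rw [hprod _ _ (hS2m i j ab.1 ab.2) (hS2m i j (!ab.1) (!ab.2)), ENNReal.toReal_mul]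
  -- key inequality: the disagreement indicators are nonnegatively correlated
  have hkey : ∀ i j, i ≠ j → q i * q j ≤ (μ (A i ∩ A j)).toReal := by
    intro i j hij
    rw [hABq i j]
    have h1 := hmar1 i j true
    have h2 := hmar1 i j false
    have h3 := hmar2 i j true
    rw [hm1t] at h1 h3
    rw [hm1f] at h2
    have hrr := hr i j hij
    have h5 : 0 ≤ 1 - 2 * p i := by linarith [hple i]
    have h6 : 0 ≤ 1 - 2 * p j := by linarith [hple j]
    have hc : 0 ≤ m2 i j true true - p i * p j := by linarith
    have hs : m2 i j true false = p i - m2 i j true true := by linarith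
    have ht : m2 i j false true = p j - m2 i j true true := by linarith
    have hu : m2 i j false false = 1 - p i - p j + m2 i j true true := by linarith
    rw [hq i, hq j, Fintype.sum_prod_type]
    simp only [Fintype.sum_bool, Bool.not_true, Bool.not_false]
    rw [hs, ht, hu]
    nlinarith [sq_nonneg (m2 i j true true - p i * p j), mul_nonneg (mul_nonneg hc h5) h6]
  -- Z as a sum of indicator functions
  have hZ' : Z = fun ω => ∑ i, Set.indicator (A i) (fun _ => (1:ℝ)) ω := by
    funext ω
    rw [hZ ω]
    refine Finset.sum_congr rfl fun i _ => ?_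
    by_cases h : X ω i = Y ω i <;> simp [Set.indicator_apply, hA, h]
  have hint : ∀ s : Set Ω, MeasurableSet s →
      Integrable (Set.indicator s fun _ => (1:ℝ)) μ := fun s hs =>
    (integrable_const 1).indicator hs
  have hmem : MemLp Z 2 μ := by
    have hZmeas : Measurable Z := by
      rw [hZ']
      exact Finset.measurable_sum _ fun i _ => measurable_const.indicator (hAmeas i)
    refine MemLp.of_bound hZmeas.aestronglyMeasurable (K : ℝ)
      (Filter.Eventually.of_forall fun ω => ?_)
    have h0 : 0 ≤ Z ω := by
      rw [hZ]
      exact Finset.sum_nonneg fun i _ => by positivity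
    have h1 : Z ω ≤ K := by
      rw [hZ]
      calc (∑ i, if X ω i ≠ Y ω i then (1:ℝ) else 0) ≤ ∑ _i : Fin K, (1:ℝ) :=
            Finset.sum_le_sum fun i _ => by split_ifs <;> norm_num
        _ = K := by
            rw [Finset.sum_const, Finset.card_univ, Fintype.card_fin, nsmul_eq_mul, mul_one]
    rw [Real.norm_eq_abs, abs_of_nonneg h0]
    exact h1
  -- expectation of Z
  have hEZ : ∫ ω, Z ω ∂μ = ∑ i, q i := by
    rw [hZ', integral_finset_sum _ fun i _ => hint _ (hAmeas i)]
    refine Finset.sum_congr rfl fun i _ => ?_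
    rw [integral_indicator_const (1:ℝ) (hAmeas i), smul_eq_mul, mul_one, measureReal_def, hAq i]
  -- second moment of Z
  have hEZ2 : ∫ ω, (Z ω)^2 ∂μ = ∑ i, ∑ j, (μ (A i ∩ A j)).toReal := by
    have hsq : ∀ ω, (Z ω)^2 = ∑ i, ∑ j, Set.indicator (A i ∩ A j) (fun _ => (1:ℝ)) ω := by
      intro ω
      rw [hZ']
      rw [sq, Finset.sum_mul_sum]
      refine Finset.sum_congr rfl fun i _ => Finset.sum_congr rfl fun j _ => ?_
      rw [← Set.inter_indicator_mul]
      congr 1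
      funext
      exact one_mul 1
    rw [funext hsq]
    rw [integral_finset_sum _ fun i _ =>
      integrable_finset_sum _ fun j _ => hint _ ((hAmeas i).inter (hAmeas j))]
    refine Finset.sum_congr rfl fun i _ => ?_
    rw [integral_finset_sum _ fun j _ => hint _ ((hAmeas i).inter (hAmeas j))]
    refine Finset.sum_congr rfl fun j _ => ?_
    rw [integral_indicator_const (1:ℝ) ((hAmeas i).inter (hAmeas j)), smul_eq_mul, mul_one, measureReal_def]
  -- variance formula
  have hvar : variance Z μ = (∑ i, ∑ j, (μ (A i ∩ A j)).toReal) - (∑ i, q i)^2 := by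
    rw [variance_eq_sub hmem]
    have e1 : μ[Z ^ 2] = ∫ ω, (Z ω)^2 ∂μ := by
      refine integral_congr_ae (Filter.Eventually.of_forall fun ω => ?_)
      simp [Pi.pow_apply]
    rw [e1, hEZ2, hEZ]
  -- comparison sum
  have hsum : ∀ i : Fin K, (∑ j, if i = j then q i else q i * q j)
      = q i * (∑ j, q j) + q i * (1 - q i) := by
    intro i
    have he : ∀ j, (if i = j then q i else q i * q j)
        = q i * q j + (if i = j then q i * (1 - q i) else 0) := by
      intro j; split_ifs with h
      · subst h; ring
      · ring
    rw [Finset.sum_congr rfl fun j _ => he j, Finset.sum_add_distrib,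
      Finset.sum_ite_eq Finset.univ i (fun _ => q i * (1 - q i)), ← Finset.mul_sum]
    simp
  have hle : ∑ i, (∑ j, if i = j then q i else q i * q j)
      ≤ ∑ i, ∑ j, (μ (A i ∩ A j)).toReal := by
    refine Finset.sum_le_sum fun i _ => Finset.sum_le_sum fun j _ => ?_
    split_ifs with h
    · subst h
      rw [Set.inter_self]
      exact le_of_eq (hAq i).symm
    · exact hkey i j h
  have htot : ∑ i, (∑ j, if i = j then q i else q i * q j)
      = (∑ i, q i)^2 + ∑ i, q i * (1 - q i) := by
    rw [Finset.sum_congr rfl fun i _ => hsum i, Finset.sum_add_distrib, ← Finset.sum_mul]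
    ring
  linarith [hle, htot, hvar.ge, hvar.le]
end
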